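/- Let H be any subgraph of G that contains the k-core G_k of G (every vertex and edge of G_k belongs to H). Then the k-core of H equals the k-core of G, and moreover for every vertex v of H with coreness at least k in G, the coreness of v in H equals the coreness of v in G. -/

import Mathlib

/-! Core sets of `H` are core sets of `G`, so cores can only shrink when passing to `H`.
Conversely, for `j ≥ k` the `j`-core of `G` lies inside the `k`-core, all of whose edges `H`
keeps, so it is still a core set of `H`; equality of the `j`-cores for all `j ≥ k` gives
equality of coreness above `k`. -/

open scoped Classical
open Finset

noncomputable section

variable {V : Type*} [Fintype V]

/-- `S` induces a subgraph of `G` in which every vertex has degree at least `k`. -/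
def IsCoreSet (G : SimpleGraph V) (k : ℕ) (S : Finset V) : Prop :=
  ∀ v ∈ S, k ≤ (S.filter (G.Adj v)).card

/-- The vertex set of the `k`-core of `G`: all vertices lying in some induced
subgraph of minimum degree at least `k`. -/
def coreSet (G : SimpleGraph V) (k : ℕ) : Finset V :=
  Finset.univ.filter fun v => ∃ S : Finset V, IsCoreSet G k S ∧ v ∈ S

/-- The coreness of `v`: the largest `k` such that `v` belongs to the `k`-core. -/
def coreness (G : SimpleGraph V) (v : V) : ℕ :=
  Nat.findGreatest (fun k => v ∈ coreSet G k) (Fintype.card V)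

lemma mem_coreSet_iff {G : SimpleGraph V} {k : ℕ} {v : V} :
    v ∈ coreSet G k ↔ ∃ S : Finset V, IsCoreSet G k S ∧ v ∈ S := by
  simp [coreSet]

lemma coreSet_mono_graph {G H : SimpleGraph V} (hle : H ≤ G) (k : ℕ) :
    coreSet H k ⊆ coreSet G k := fun v hv => by
  obtain ⟨S, hS, hvS⟩ := mem_coreSet_iff.1 hv
  refine mem_coreSet_iff.2 ⟨S, fun u hu => (hS u hu).trans (card_le_card ?_), hvS⟩
  exact monotone_filter_right _ fun _ _ hadj => hle hadj

lemma coreSet_anti (G : SimpleGraph V) {j k : ℕ} (hkj : k ≤ j) :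
    coreSet G j ⊆ coreSet G k := fun v hv => by
  obtain ⟨S, hS, hvS⟩ := mem_coreSet_iff.1 hv
  exact mem_coreSet_iff.2 ⟨S, fun u hu => hkj.trans (hS u hu), hvS⟩

lemma isCoreSet_coreSet (G : SimpleGraph V) (k : ℕ) : IsCoreSet G k (coreSet G k) := by
  intro v hv
  obtain ⟨S, hS, hvS⟩ := mem_coreSet_iff.1 hv
  refine (hS v hvS).trans (card_le_card fun u hu => ?_)
  rw [mem_filter] at hu ⊢
  exact ⟨mem_coreSet_iff.2 ⟨S, hS, hu.1⟩, hu.2⟩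

lemma coreSet_subset_of_adj {G H : SimpleGraph V} {k : ℕ}
    (hadj : ∀ u v : V, u ∈ coreSet G k → v ∈ coreSet G k → G.Adj u v → H.Adj u v) :
    coreSet G k ⊆ coreSet H k := by
  refine fun v hv => mem_coreSet_iff.2 ⟨coreSet G k, fun u hu => ?_, hv⟩
  refine (isCoreSet_coreSet G k u hu).trans (card_le_card fun w hw => ?_)
  rw [mem_filter] at hw ⊢
  exact ⟨hw.1, hadj u w hu hw.1 hw.2⟩

lemma mem_coreSet_coreness (G : SimpleGraph V) (v : V) : v ∈ coreSet G (coreness G v) :=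
  Nat.findGreatest_spec (P := fun k => v ∈ coreSet G k) (Nat.zero_le _)
    (mem_coreSet_iff.2 ⟨{v}, fun _ _ => Nat.zero_le _, mem_singleton_self v⟩)

lemma coreness_mono_graph {G H : SimpleGraph V} (hle : H ≤ G) (v : V) :
    coreness H v ≤ coreness G v :=
  Nat.findGreatest_mono (fun j hj => coreSet_mono_graph hle j hj) le_rfl

lemma le_coreness_of_mem_coreSet {G : SimpleGraph V} {k : ℕ} {v : V} (hv : v ∈ coreSet G k) :
    k ≤ coreness G v := by
  obtain ⟨S, hS, hvS⟩ := mem_coreSet_iff.1 hv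
  exact Nat.le_findGreatest ((hS v hvS).trans (card_le_univ _)) hv

theorem coreSet_of_supergraph_of_kcore (G H : SimpleGraph V) (k : ℕ) (hle : H ≤ G)
    (hcore : ∀ u v : V, u ∈ coreSet G k → v ∈ coreSet G k → G.Adj u v → H.Adj u v) :
    coreSet H k = coreSet G k ∧
    ∀ v : V, k ≤ coreness G v → coreness H v = coreness G v := by
  have hsub : ∀ j, k ≤ j → coreSet G j ⊆ coreSet H j := fun j hkj =>
    coreSet_subset_of_adj fun u w hu hw =>
      hcore u w (coreSet_anti G hkj hu) (coreSet_anti G hkj hw)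
  refine ⟨(coreSet_mono_graph hle k).antisymm (hsub k le_rfl), fun v hv => ?_⟩
  exact (coreness_mono_graph hle v).antisymm
    (le_coreness_of_mem_coreSet (hsub _ hv (mem_coreSet_coreness G v)))

end
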